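/- Let 0 < s ≤ 1, δ > 0, and let S₁ ⊆ ℝ² be a bounded set. Let S₁^δ := {w ∈ ℝ² : dist(w, S₁) < δ} be the open δ-neighbourhood of S₁. Then the two-dimensional Lebesgue measure of S₁^δ satisfies Leb²(S₁^δ) ≥ π·4^{−s}·H^s_∞(S₁)·δ^{2−s}. -/

import Mathlib

/-!
Take a maximal `2δ`-separated subset `N` of `S₁`. By maximality the closed `2δ`-balls around
`N` cover `S₁`, so `H^s_∞(S₁) ≤ #N · (4δ)^s`; by separation the open `δ`-balls around `N` are
disjoint subsets of `S₁^δ`, so `Leb²(S₁^δ) ≥ #N · πδ²`. Since the plane is separable, `N` is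
countable, and both estimates hold even when `N` is infinite.
-/

open scoped ENNReal NNReal Real
open MeasureTheory Metric Set

/-- The `d`-dimensional Hausdorff content of a set:
`H^d_∞(A) = inf { ∑ᵢ (diam Uᵢ)^d : A ⊆ ⋃ᵢ Uᵢ }`. -/
noncomputable def hausdorffContent {X : Type*} [PseudoEMetricSpace X] (d : ℝ) (A : Set X) :
    ℝ≥0∞ :=
  ⨅ (U : ℕ → Set X) (_ : A ⊆ ⋃ i, U i), ∑' i, EMetric.diam (U i) ^ d

variable {X : Type*}

theorem Metric.exists_maximal_isSeparated [PseudoEMetricSpace X] (ε : ℝ≥0∞) (s : Set X) :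
    ∃ N, Maximal (fun N ↦ N ⊆ s ∧ IsSeparated ε N) N :=
  zorn_subset _ fun c hc hchain ↦ ⟨⋃₀ c,
    ⟨sUnion_subset fun _ ht ↦ (hc ht).1, hchain.pairwise_sUnion.2 fun _ ht ↦ (hc ht).2⟩,
    fun _ ↦ subset_sUnion_of_mem⟩

theorem Metric.IsSeparated.pairwiseDisjoint_ball [PseudoMetricSpace X] {ε : ℝ≥0} {N : Set X}
    (hN : IsSeparated ε N) : N.PairwiseDisjoint (ball · (ε / 2)) := by
  intro x hx y hy hxy
  refine ball_disjoint_ball ?_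
  have h : (ε : ℝ≥0∞) < edist x y := hN hx hy hxy
  rw [edist_nndist, ENNReal.coe_lt_coe, ← NNReal.coe_lt_coe, coe_nndist] at h
  linarith

theorem Metric.IsSeparated.countable [PseudoMetricSpace X] [TopologicalSpace.SeparableSpace X]
    {ε : ℝ≥0} {N : Set X} (hε : ε ≠ 0) (hN : IsSeparated ε N) : N.Countable :=
  hN.pairwiseDisjoint_ball.countable_of_isOpen (fun _ _ ↦ isOpen_ball)
    fun _ _ ↦ nonempty_ball.2 (by positivity)

theorem hausdorffContent_le_tsum [PseudoEMetricSpace X] {ι : Type*} [Countable ι] {d : ℝ}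
    (hd : 0 < d) {A : Set X} (U : ι → Set X) (hA : A ⊆ ⋃ i, U i) :
    hausdorffContent d A ≤ ∑' i, ediam (U i) ^ d := by
  have := Encodable.ofCountable ι
  refine iInf₂_le_of_le (fun n ↦ ⋃ i ∈ Encodable.decode₂ ι n, U i)
    (by rwa [Encodable.iUnion_decode₂]) ?_
  exact (tsum_iUnion_decode₂ (fun s ↦ ediam s ^ d) (by simp [hd]) U).le

theorem hausdorffContent_le_encard_mul_of_isCover [PseudoEMetricSpace X] {d : ℝ} (hd : 0 < d)
    {ε : ℝ≥0} {A N : Set X} (hN : N.Countable) (hAN : IsCover ε A N) :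
    hausdorffContent d A ≤ N.encard * (2 * ε) ^ d := by
  have := hN.to_subtype
  rw [isCover_iff_subset_iUnion_closedEBall, biUnion_eq_iUnion] at hAN
  calc hausdorffContent d A ≤ ∑' x : N, ediam (closedEBall (x : X) ε) ^ d :=
        hausdorffContent_le_tsum hd _ hAN
    _ ≤ ∑' _ : N, (2 * (ε : ℝ≥0∞)) ^ d :=
        ENNReal.tsum_le_tsum fun _ ↦ ENNReal.rpow_le_rpow ediam_closedEBall_le hd.le
    _ = N.encard * (2 * ε) ^ d := ENNReal.tsum_const _

theorem tsum_measure_ball_le_measure_thickening [PseudoMetricSpace X] [MeasurableSpace X]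
    [OpensMeasurableSpace X] (μ : Measure X) {r : ℝ} {A N : Set X} (hNA : N ⊆ A)
    (hN : N.Countable) (hdisj : N.PairwiseDisjoint (ball · r)) :
    ∑' x : N, μ (ball x r) ≤ μ (thickening r A) := by
  rw [← measure_biUnion hN hdisj fun _ _ ↦ measurableSet_ball]
  exact measure_mono (iUnion₂_subset fun x hx ↦ ball_subset_thickening (hNA hx) r)

theorem ofReal_mul_four_mul_rpow_eq_volume_ball {s : ℝ} (hs : 0 ≤ s) (δ : ℝ≥0)
    (x : EuclideanSpace ℝ (Fin 2)) :
    ENNReal.ofReal (π * (4 : ℝ) ^ (-s) * δ ^ (2 - s)) * (4 * δ : ℝ≥0∞) ^ s =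
      volume (ball x δ) := by
  have h4 : (4 : ℝ) ^ (-s) * 4 ^ s = 1 := by
    rw [Real.rpow_neg (by norm_num), inv_mul_cancel₀ (by positivity)]
  have hδ : (δ : ℝ) ^ (2 - s) * δ ^ s = δ ^ 2 := by
    rw [← Real.rpow_add' δ.coe_nonneg (by norm_num), sub_add_cancel, Real.rpow_two]
  rw [EuclideanSpace.volume_ball_fin_two, ← ENNReal.ofReal_ofNat 4, ← ENNReal.ofReal_coe_nnreal,
    ← ENNReal.ofReal_mul (by norm_num), ENNReal.ofReal_rpow_of_nonneg (by positivity) hs,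
    ← ENNReal.ofReal_mul (by positivity), ← ENNReal.ofReal_pow δ.coe_nonneg,
    ← ENNReal.ofReal_mul (by positivity), Real.mul_rpow (by norm_num) δ.coe_nonneg]
  congr 1
  linear_combination (π * 4 ^ (-s) * 4 ^ s) * hδ + π * δ ^ 2 * h4

theorem volume_thickening_ge_content_general
    (s δ : ℝ) (hs0 : 0 < s) (hδ : 0 < δ)
    (S₁ : Set (EuclideanSpace ℝ (Fin 2))) :
    ENNReal.ofReal (π * (4 : ℝ) ^ (-s) * δ ^ (2 - s)) * hausdorffContent s S₁
      ≤ volume (Metric.thickening δ S₁) := by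
  lift δ to ℝ≥0 using hδ.le
  norm_cast at hδ
  obtain ⟨N, ⟨hNS, hNsep⟩, hNmax⟩ := exists_maximal_isSeparated ((2 * δ : ℝ≥0) : ℝ≥0∞) S₁
  have hN : N.Countable := hNsep.countable (by positivity)
  have hcover : IsCover (2 * δ) S₁ N := .of_maximal_isSeparated ⟨⟨hNS, hNsep⟩, hNmax⟩
  have hcontent := hausdorffContent_le_encard_mul_of_isCover hs0 hN hcover
  calc ENNReal.ofReal (π * (4 : ℝ) ^ (-s) * δ ^ (2 - s)) * hausdorffContent s S₁
      ≤ ENNReal.ofReal (π * (4 : ℝ) ^ (-s) * δ ^ (2 - s)) *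
          (N.encard * (2 * (2 * δ : ℝ≥0)) ^ s) := by
        gcongr
    _ = ∑' x : N, volume (ball (x : EuclideanSpace ℝ (Fin 2)) δ) := by
        simp_rw [← ofReal_mul_four_mul_rpow_eq_volume_ball hs0.le δ, ENNReal.tsum_const, Set.encard]
        push_cast
        ring_nf
    _ ≤ volume (thickening δ S₁) := by
        simpa using
          tsum_measure_ball_le_measure_thickening volume hNS hN hNsep.pairwiseDisjoint_ball

/-- **Volume of a `δ`-neighbourhood from Hausdorff content (inequality (4.16)).**
For `0 < s ≤ 1`, `δ > 0` and a bounded set `S₁ ⊆ ℝ²`, the open `δ`-neighbourhood `S₁^δ`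
satisfies `Leb²(S₁^δ) ≥ π·4^{−s}·H^s_∞(S₁)·δ^{2−s}`. -/
theorem volume_thickening_ge_content
    (s δ : ℝ) (hs0 : 0 < s) (hs1 : s ≤ 1) (hδ : 0 < δ)
    (S₁ : Set (EuclideanSpace ℝ (Fin 2))) (hS₁ : Bornology.IsBounded S₁) :
    ENNReal.ofReal (π * (4 : ℝ) ^ (-s) * δ ^ (2 - s)) * hausdorffContent s S₁
      ≤ volume (Metric.thickening δ S₁) :=
  volume_thickening_ge_content_general s δ hs0 hδ S₁
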